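/- Let μ be a probability measure on ℝ with inverse distribution function G, and let p ∈ (0,1). Define Y₁(t) = G((1−p)t) and δ⁻_p(t) = G(1−pt) − G((1−p)t) for t ∈ (0,1). Then the pushforward, under the map (t,η) ↦ Y₁(t) + δ⁻_p(t)·η, of the product of Lebesgue measure on (0,1) with the Bernoulli measure (1−p)·δ₀ + p·δ₁ on {0,1}, equals μ. In particular, if t is uniformly distributed on (0,1) and η is an independent {0,1}-valued Bernoulli variable with P(η=1)=p, then Y₁(t) + δ⁻_p(t)·η has distribution μ. -/

import Mathlib

/-!
Conditionally on `η = 0` the variable `Y₁(t) + δ⁻_p(t) η` equals `G((1-p)t)`, which is `G` of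
a uniform variable on `(0, 1-p)`; conditionally on `η = 1` it equals `G(1-pt)`, which is `G` of
a uniform variable on `(1-p, 1)`. Mixing with weights `1-p` and `p` gives `G` of a uniform
variable on `(0,1)`, whose law is `μ` because `G t ≤ x ↔ t ≤ F x` for `t ∈ (0,1)`.
-/

open MeasureTheory Set

/-- The inverse distribution function `G(t) = inf {u : μ((-∞,u]) ≥ t}`. -/
noncomputable def invCDF (μ : Measure ℝ) (t : ℝ) : ℝ :=
  sInf {u : ℝ | t ≤ (μ (Iic u)).toReal}

/-- The Bernoulli measure on `{0,1} ⊆ ℝ` with `P({1}) = p`. -/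
noncomputable def bernoulliMeasure (p : ℝ) : Measure ℝ :=
  ENNReal.ofReal (1 - p) • Measure.dirac (0:ℝ) + ENNReal.ofReal p • Measure.dirac (1:ℝ)

section InverseCDF

open ProbabilityTheory Filter

variable {μ : Measure ℝ} [IsProbabilityMeasure μ]

lemma invCDF_eq_sInf_cdf (t : ℝ) : invCDF μ t = sInf {u | t ≤ cdf μ u} := by
  simp [invCDF, cdf_eq_real, measureReal_def]

lemma invCDF_le_iff {t x : ℝ} (ht : t ∈ Ioo 0 1) : invCDF μ t ≤ x ↔ t ≤ cdf μ x := by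
  set S := {u | t ≤ cdf μ u}
  have hS : S.Nonempty := ((tendsto_cdf_atTop μ).eventually (eventually_ge_nhds ht.2)).exists
  have hS_bdd : BddBelow S := by
    obtain ⟨u₀, hu₀⟩ := ((tendsto_cdf_atBot μ).eventually (eventually_lt_nhds ht.1)).exists
    exact ⟨u₀, fun u hu =>
      le_of_not_ge fun hu' => (hu.trans (monotone_cdf μ hu')).not_gt hu₀⟩
  rw [invCDF_eq_sInf_cdf]
  refine ⟨fun h => le_trans ?_ (monotone_cdf μ h), fun h => csInf_le hS_bdd h⟩
  -- `S` is an up-set, so `t ≤ cdf μ` on `(sInf S, ∞)`; right-continuity passes to `sInf S`.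
  have h_right : ∀ y ∈ Ioi (sInf S), t ≤ cdf μ y := fun y hy => by
    obtain ⟨u, hu, huy⟩ := (csInf_lt_iff hS_bdd hS).mp hy
    exact hu.trans (monotone_cdf μ huy.le)
  exact ge_of_tendsto
    (((cdf μ).right_continuous _).mono_left (nhdsWithin_mono _ Ioi_subset_Ici_self))
    (eventually_nhdsWithin_of_forall h_right)

lemma monotoneOn_invCDF : MonotoneOn (invCDF μ) (Ioo 0 1) := fun _ hs _ ht hst =>
  (invCDF_le_iff hs).mpr (hst.trans ((invCDF_le_iff ht).mp le_rfl))

lemma aemeasurable_invCDF_restrict {s : Set ℝ} (hs : s ⊆ Ioo 0 1) :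
    AEMeasurable (invCDF μ) (volume.restrict s) :=
  (aemeasurable_restrict_of_monotoneOn measurableSet_Ioo monotoneOn_invCDF).mono_measure
    (Measure.restrict_mono hs le_rfl)

lemma volume_Ioo_inter_Iic {c : ℝ} (hc : c ≤ 1) :
    volume (Ioo 0 1 ∩ Iic c) = ENNReal.ofReal c := by
  have h_eq : Ioo 0 1 ∩ Iic c = Ioc 0 c \ {1} := by
    ext t
    simp only [mem_inter_iff, mem_Ioo, mem_Iic, Set.mem_sdiff, mem_Ioc, mem_singleton_iff]
    constructor
    · rintro ⟨⟨h0, h1⟩, htc⟩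
      exact ⟨⟨h0, htc⟩, h1.ne⟩
    · rintro ⟨⟨h0, htc⟩, h1⟩
      exact ⟨⟨h0, lt_of_le_of_ne (htc.trans hc) h1⟩, htc⟩
  rw [h_eq, measure_sdiff_null Real.volume_singleton, Real.volume_Ioc, sub_zero]

theorem map_invCDF_volume_Ioo : (volume.restrict (Ioo 0 1)).map (invCDF μ) = μ := by
  have hG := aemeasurable_invCDF_restrict (μ := μ) subset_rfl
  refine Measure.ext_of_Iic _ _ fun x => ?_
  have h_pre : invCDF μ ⁻¹' Iic x ∩ Ioo 0 1 = Ioo 0 1 ∩ Iic (cdf μ x) := by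
    ext t
    simp only [mem_inter_iff, mem_preimage, mem_Iic]
    exact ⟨fun ⟨h, ht⟩ => ⟨ht, (invCDF_le_iff ht).mp h⟩,
      fun ⟨ht, h⟩ => ⟨(invCDF_le_iff ht).mpr h, ht⟩⟩
  rw [Measure.map_apply_of_aemeasurable hG measurableSet_Iic,
    Measure.restrict_apply' measurableSet_Ioo, h_pre, volume_Ioo_inter_Iic (cdf_le_one μ x),
    ofReal_cdf]

end InverseCDF

section AffineImages

variable {β : Type*} [MeasurableSpace β] {a : ℝ} (b : ℝ) {s : Set ℝ}

lemma Real.smul_map_volume_add_mul (ha : a ≠ 0) :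
    ENNReal.ofReal |a| • volume.map (fun t => b + a * t) = volume := by
  have h_comp : (fun t => b + a * t) = (b + ·) ∘ (a * ·) := rfl
  rw [h_comp, ← Measure.map_map (measurable_const_add b) (measurable_const_mul a),
    ← Measure.map_smul, Real.smul_map_volume_mul_left ha, map_add_left_eq_self]

lemma Real.smul_map_volume_restrict_preimage_add_mul (ha : a ≠ 0) (hs : MeasurableSet s) :
    ENNReal.ofReal |a| •
        (volume.restrict ((fun t => b + a * t) ⁻¹' s)).map (fun t => b + a * t) =
      volume.restrict s := by
  rw [← Measure.restrict_map (by fun_prop) hs, ← Measure.restrict_smul,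
    Real.smul_map_volume_add_mul b ha]

lemma aemeasurable_comp_add_mul {G : ℝ → β} (ha : a ≠ 0) (hs : MeasurableSet s)
    (hG : AEMeasurable G (volume.restrict s)) :
    AEMeasurable (fun t => G (b + a * t)) (volume.restrict ((fun t => b + a * t) ⁻¹' s)) := by
  rw [← Real.smul_map_volume_restrict_preimage_add_mul b ha hs,
    aemeasurable_smul_measure_iff (by simpa using ha)] at hG
  exact hG.comp_aemeasurable (by fun_prop)

lemma smul_map_comp_add_mul_volume_restrict {G : ℝ → β} (ha : a ≠ 0) (hs : MeasurableSet s)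
    (hG : AEMeasurable G (volume.restrict s)) :
    ENNReal.ofReal |a| •
        (volume.restrict ((fun t => b + a * t) ⁻¹' s)).map (fun t => G (b + a * t)) =
      (volume.restrict s).map G := by
  rw [← Real.smul_map_volume_restrict_preimage_add_mul b ha hs] at hG ⊢
  rw [Measure.map_smul, AEMeasurable.map_map_of_aemeasurable _ (by fun_prop)]
  · rfl
  · exact (aemeasurable_smul_measure_iff (by simpa using ha)).mp hG

lemma preimage_const_mul_Ioo_zero_self {c : ℝ} (hc : 0 < c) :
    (fun t => c * t) ⁻¹' Ioo 0 c = Ioo 0 1 := by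
  ext t
  simp only [mem_preimage, mem_Ioo]
  constructor <;> rintro ⟨h₀, h₁⟩ <;> constructor <;> nlinarith

lemma preimage_one_sub_const_mul_Ioo {c : ℝ} (hc : 0 < c) :
    (fun t => 1 - c * t) ⁻¹' Ioo (1 - c) 1 = Ioo 0 1 := by
  ext t
  simp only [mem_preimage, mem_Ioo]
  constructor <;> rintro ⟨h₀, h₁⟩ <;> constructor <;> nlinarith

variable {G : ℝ → β} {c : ℝ}

lemma aemeasurable_comp_mul_volume_Ioo (hc : 0 < c)
    (hG : AEMeasurable G (volume.restrict (Ioo 0 c))) :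
    AEMeasurable (fun t => G (c * t)) (volume.restrict (Ioo 0 1)) := by
  simpa [preimage_const_mul_Ioo_zero_self hc] using
    aemeasurable_comp_add_mul 0 hc.ne' measurableSet_Ioo hG

lemma aemeasurable_comp_one_sub_mul_volume_Ioo (hc : 0 < c)
    (hG : AEMeasurable G (volume.restrict (Ioo (1 - c) 1))) :
    AEMeasurable (fun t => G (1 - c * t)) (volume.restrict (Ioo 0 1)) := by
  simpa [preimage_one_sub_const_mul_Ioo hc, ← sub_eq_add_neg] using
    aemeasurable_comp_add_mul 1 (neg_ne_zero.2 hc.ne') measurableSet_Ioo hG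

lemma smul_map_comp_mul_volume_Ioo (hc : 0 < c)
    (hG : AEMeasurable G (volume.restrict (Ioo 0 c))) :
    ENNReal.ofReal c • (volume.restrict (Ioo 0 1)).map (fun t => G (c * t)) =
      (volume.restrict (Ioo 0 c)).map G := by
  simpa [preimage_const_mul_Ioo_zero_self hc, abs_of_pos hc] using
    smul_map_comp_add_mul_volume_restrict 0 hc.ne' measurableSet_Ioo hG

lemma smul_map_comp_one_sub_mul_volume_Ioo (hc : 0 < c)
    (hG : AEMeasurable G (volume.restrict (Ioo (1 - c) 1))) :
    ENNReal.ofReal c • (volume.restrict (Ioo 0 1)).map (fun t => G (1 - c * t)) =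
      (volume.restrict (Ioo (1 - c) 1)).map G := by
  simpa [preimage_one_sub_const_mul_Ioo hc, abs_of_pos hc, ← sub_eq_add_neg] using
    smul_map_comp_add_mul_volume_restrict 1 (neg_ne_zero.2 hc.ne') measurableSet_Ioo hG

end AffineImages

lemma MeasureTheory.Measure.restrict_Ioo_add_restrict_Ioo (ν : Measure ℝ) [NullSingletonClass ν]
    {a b c : ℝ} (hab : a ≤ b) (hbc : b < c) :
    ν.restrict (Ioo a b) + ν.restrict (Ioo b c) = ν.restrict (Ioo a c) := by
  rw [Measure.restrict_congr_set Ioo_ae_eq_Ioc,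
    ← Measure.restrict_union (Ioc_disjoint_Ioi_same.mono_right Ioo_subset_Ioi_self)
      measurableSet_Ioo, Ioc_union_Ioo_eq_Ioo hab hbc]

lemma map_prod_bernoulliMeasure {β : Type*} [MeasurableSpace β] {ν : Measure ℝ} [SFinite ν]
    {f : ℝ × ℝ → β} (p : ℝ) (h₀ : AEMeasurable (fun t => f (t, 0)) ν)
    (h₁ : AEMeasurable (fun t => f (t, 1)) ν) :
    (ν.prod (bernoulliMeasure p)).map f =
      ENNReal.ofReal (1 - p) • ν.map (fun t => f (t, 0)) +
        ENNReal.ofReal p • ν.map (fun t => f (t, 1)) := by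
  have hf (y : ℝ) (hy : AEMeasurable (fun t => f (t, y)) ν) :
      AEMeasurable f (ν.map fun t => (t, y)) :=
    (measurableEmbedding_prod_mk_right y).aemeasurable_map_iff.mpr hy
  rw [bernoulliMeasure, Measure.prod_add, Measure.prod_smul_right, Measure.prod_smul_right,
    Measure.prod_dirac, Measure.prod_dirac,
    AEMeasurable.map_add₀ ((hf 0 h₀).smul_measure _) ((hf 1 h₁).smul_measure _),
    Measure.map_smul, Measure.map_smul,
    AEMeasurable.map_map_of_aemeasurable (hf 0 h₀) (by fun_prop),
    AEMeasurable.map_map_of_aemeasurable (hf 1 h₁) (by fun_prop)]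
  rfl

/-- Bernoulli decomposition via the "colliding Pac-Men" construction:
if `t` is uniform on `(0,1)` and `η` is an independent Bernoulli(p) variable, then
`Y₁(t) + δ⁻_p(t) η` has distribution `μ`, where `Y₁(t) = G((1-p)t)` and
`δ⁻_p(t) = G(1-pt) - G((1-p)t)`. -/
theorem bernoulli_decomposition_minus (μ : Measure ℝ) [IsProbabilityMeasure μ]
    (p : ℝ) (hp : p ∈ Ioo (0:ℝ) 1) :
    Measure.map
      (fun q : ℝ × ℝ =>
        invCDF μ ((1 - p) * q.1) +
          (invCDF μ (1 - p * q.1) - invCDF μ ((1 - p) * q.1)) * q.2)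
      ((volume.restrict (Ioo (0:ℝ) 1)).prod (bernoulliMeasure p)) = μ := by
  obtain ⟨hp₀, hp₁⟩ := hp
  have hG_lower : AEMeasurable (invCDF μ) (volume.restrict (Ioo 0 (1 - p))) :=
    aemeasurable_invCDF_restrict (Ioo_subset_Ioo_right (by linarith))
  have hG_upper : AEMeasurable (invCDF μ) (volume.restrict (Ioo (1 - p) 1)) :=
    aemeasurable_invCDF_restrict (Ioo_subset_Ioo_left (by linarith))
  have hY₁ := aemeasurable_comp_mul_volume_Ioo (sub_pos.2 hp₁) hG_lower
  have hY₂ := aemeasurable_comp_one_sub_mul_volume_Ioo hp₀ hG_upper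
  rw [map_prod_bernoulliMeasure p (by simpa using hY₁) (by simpa using hY₂)]
  calc _ = ENNReal.ofReal (1 - p) •
          (volume.restrict (Ioo 0 1)).map (fun t => invCDF μ ((1 - p) * t)) +
        ENNReal.ofReal p • (volume.restrict (Ioo 0 1)).map (fun t => invCDF μ (1 - p * t)) := by
        simp only [mul_zero, add_zero, mul_one, add_sub_cancel]
    _ = (volume.restrict (Ioo 0 (1 - p))).map (invCDF μ) +
        (volume.restrict (Ioo (1 - p) 1)).map (invCDF μ) := by
        rw [smul_map_comp_mul_volume_Ioo (sub_pos.2 hp₁) hG_lower,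
          smul_map_comp_one_sub_mul_volume_Ioo hp₀ hG_upper]
    _ = (volume.restrict (Ioo 0 1)).map (invCDF μ) := by
        rw [← AEMeasurable.map_add₀ hG_lower hG_upper,
          Measure.restrict_Ioo_add_restrict_Ioo _ (by linarith) (by linarith)]
    _ = μ := map_invCDF_volume_Ioo
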